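/- Let Z be a real n×n matrix, let S := −(Z + Zᵀ)/2 with spectral decomposition S = UΓUᵀ (U orthogonal, Γ real diagonal), and set P := U·max(Γ, 0)·Uᵀ and D* := (Z − Zᵀ)/2 − P. Then D* belongs to 𝒟 (i.e., D* = J − R for some skew-symmetric J and positive semidefinite R), and for all real n×n matrices J, R with Jᵀ = −J and R positive semidefinite, ‖Z − D*‖_F ≤ ‖Z − (J − R)‖_F; that is, D* is the projection of Z onto 𝒟. -/

import Mathlib

/-!
Write `Z = K - S` with `K` skew and `S = U diag(d) Uᵀ` symmetric. Symmetric and skew matrices are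
orthogonal for the Frobenius inner product, so `‖Z - (J - R)‖² = ‖R - S‖² + ‖K - J‖²`: the skew part
is matched exactly by `J = K`, and it remains to find a positive semidefinite `R` nearest to `S`.
Conjugating by `U`, `‖R - S‖ = ‖UᵀRU - diag(d)‖`, which is at least the norm of its diagonal
`(UᵀRU)ᵢᵢ - dᵢ`. The diagonal of a positive semidefinite matrix is nonnegative, so each of these
entries squared is at least `(max(dᵢ, 0) - dᵢ)²`, which is what `R = P` attains.
-/

open Matrix

noncomputable def frobNorm {n : ℕ} (A : Matrix (Fin n) (Fin n) ℝ) : ℝ :=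
  Real.sqrt (∑ i, ∑ j, (A i j) ^ 2)

namespace Matrix

variable {m n : Type*} [Fintype m] [Fintype n]

def frobSq (A : Matrix m n ℝ) : ℝ :=
  ∑ i, ∑ j, A i j ^ 2

theorem frobNorm_eq_sqrt_frobSq {k : ℕ} (A : Matrix (Fin k) (Fin k) ℝ) :
    frobNorm A = √(frobSq A) :=
  rfl

theorem frobSq_nonneg (A : Matrix m n ℝ) : 0 ≤ frobSq A :=
  Finset.sum_nonneg fun _ _ => Finset.sum_nonneg fun _ _ => sq_nonneg _

theorem frobSq_eq_trace (A : Matrix m n ℝ) : frobSq A = trace (Aᵀ * A) := by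
  simp only [frobSq, trace, diag, mul_apply, transpose_apply, sq]
  exact Finset.sum_comm

theorem frobSq_conj_of_transpose_mul_self_eq_one [DecidableEq n] {U : Matrix m n ℝ}
    (hU : Uᵀ * U = 1) (X : Matrix n n ℝ) : frobSq (U * X * Uᵀ) = frobSq X := by
  have hgram : (U * X * Uᵀ)ᵀ * (U * X * Uᵀ) = U * (Xᵀ * X) * Uᵀ := by
    simp only [transpose_mul, transpose_transpose, Matrix.mul_assoc]
    rw [← Matrix.mul_assoc Uᵀ U, hU, Matrix.one_mul]
  rw [frobSq_eq_trace, frobSq_eq_trace, hgram, trace_mul_cycle, hU, Matrix.one_mul]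

theorem frobSq_add_of_transpose_eq_of_transpose_eq_neg {S K : Matrix n n ℝ} (hS : Sᵀ = S)
    (hK : Kᵀ = -K) : frobSq (S + K) = frobSq S + frobSq K := by
  have hcross : trace (Sᵀ * K) + trace (Kᵀ * S) = 0 := by
    rw [hS, hK, Matrix.neg_mul, trace_neg, trace_mul_comm K S, add_neg_cancel]
  simp only [frobSq_eq_trace, transpose_add, Matrix.add_mul, Matrix.mul_add, trace_add]
  linarith

theorem frobSq_diagonal [DecidableEq n] (v : n → ℝ) : frobSq (diagonal v) = ∑ i, v i ^ 2 := by
  simp [frobSq_eq_trace, diagonal_mul_diagonal, sq]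

theorem sum_diag_sq_le_frobSq (A : Matrix n n ℝ) : ∑ i, A i i ^ 2 ≤ frobSq A :=
  Finset.sum_le_sum fun i _ =>
    Finset.single_le_sum (f := fun j => A i j ^ 2) (fun _ _ => sq_nonneg _) (Finset.mem_univ i)

theorem frobSq_le_frobSq_add_of_transpose_eq_of_transpose_eq_neg {S K : Matrix n n ℝ}
    (hS : Sᵀ = S) (hK : Kᵀ = -K) : frobSq S ≤ frobSq (S + K) := by
  rw [frobSq_add_of_transpose_eq_of_transpose_eq_neg hS hK]
  exact le_add_of_nonneg_right (frobSq_nonneg K)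

theorem sq_max_zero_sub_le_sq_sub (a : ℝ) {b : ℝ} (hb : 0 ≤ b) :
    (max a 0 - a) ^ 2 ≤ (b - a) ^ 2 := by
  rcases le_total a 0 with ha | ha
  · rw [max_eq_right ha]
    nlinarith
  · simp [max_eq_left ha, sq_nonneg]

theorem frobSq_diagonal_max_zero_sub_le [DecidableEq n] (a : n → ℝ) {B : Matrix n n ℝ}
    (hB : B.PosSemidef) :
    frobSq (diagonal (fun i => max (a i) 0) - diagonal a) ≤ frobSq (B - diagonal a) :=
  calc frobSq (diagonal (fun i => max (a i) 0) - diagonal a)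
      = ∑ i, (max (a i) 0 - a i) ^ 2 := by rw [diagonal_sub, frobSq_diagonal]
    _ ≤ ∑ i, (B - diagonal a) i i ^ 2 :=
        Finset.sum_le_sum fun i _ => by simpa using sq_max_zero_sub_le_sq_sub (a i) hB.diag_nonneg
    _ ≤ frobSq (B - diagonal a) := sum_diag_sq_le_frobSq _

theorem frobSq_conj_max_zero_sub_le [DecidableEq n] {U : Matrix n n ℝ} (hU : Uᵀ * U = 1)
    (a : n → ℝ) {R : Matrix n n ℝ} (hR : R.PosSemidef) :
    frobSq (U * diagonal (fun i => max (a i) 0) * Uᵀ - U * diagonal a * Uᵀ) ≤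
      frobSq (R - U * diagonal a * Uᵀ) := by
  have hUUt : U * Uᵀ = 1 := mul_eq_one_comm.mp hU
  have hR_conj : R = U * (Uᵀ * R * U) * Uᵀ := by
    simp only [← Matrix.mul_assoc, hUUt, Matrix.one_mul]
    rw [Matrix.mul_assoc, hUUt, Matrix.mul_one]
  have hB : (Uᵀ * R * U).PosSemidef := by
    simpa [conjTranspose_eq_transpose_of_trivial] using hR.conjTranspose_mul_mul_same U
  rw [hR_conj, ← Matrix.sub_mul, ← Matrix.mul_sub, ← Matrix.sub_mul, ← Matrix.mul_sub,
    frobSq_conj_of_transpose_mul_self_eq_one hU, frobSq_conj_of_transpose_mul_self_eq_one hU]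
  exact frobSq_diagonal_max_zero_sub_le a hB

end Matrix

theorem projection_onto_D {n : ℕ} (Z U : Matrix (Fin n) (Fin n) ℝ) (d : Fin n → ℝ)
    (hU : Uᵀ * U = 1)
    (hS : -((2 : ℝ)⁻¹ • (Z + Zᵀ)) = U * Matrix.diagonal d * Uᵀ) :
    let P := U * Matrix.diagonal (fun i => max (d i) 0) * Uᵀ
    let Dstar := (2 : ℝ)⁻¹ • (Z - Zᵀ) - P
    (∃ J R : Matrix (Fin n) (Fin n) ℝ, Jᵀ = -J ∧ R.PosSemidef ∧ Dstar = J - R) ∧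
    ∀ J R : Matrix (Fin n) (Fin n) ℝ, Jᵀ = -J → R.PosSemidef →
      frobNorm (Z - Dstar) ≤ frobNorm (Z - (J - R)) := by
  intro P Dstar
  set S := U * diagonal d * Uᵀ
  set K := (2 : ℝ)⁻¹ • (Z - Zᵀ)
  have hZ : Z = K - S := by rw [← hS]; ext i j; simp [K]; ring
  have hSt : Sᵀ = S := by rw [← hS]; simp [add_comm]
  have hKt : Kᵀ = -K := by simp [K, ← smul_neg]
  have hP : P.PosSemidef := by
    simpa [conjTranspose_eq_transpose_of_trivial] using
      (PosSemidef.diagonal fun i => le_max_right (d i) 0).mul_mul_conjTranspose_same U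
  refine ⟨⟨K, P, hKt, hP, rfl⟩, fun J R hJ hR => ?_⟩
  have hRt : Rᵀ = R := by simpa [conjTranspose_eq_transpose_of_trivial] using hR.isHermitian.eq
  rw [frobNorm_eq_sqrt_frobSq, frobNorm_eq_sqrt_frobSq]
  gcongr
  calc frobSq (Z - (K - P)) = frobSq (P - S) := by rw [hZ]; congr 1; abel
    _ ≤ frobSq (R - S) := frobSq_conj_max_zero_sub_le hU d hR
    _ ≤ frobSq (R - S + (K - J)) :=
        frobSq_le_frobSq_add_of_transpose_eq_of_transpose_eq_neg
          (by rw [transpose_sub, hRt, hSt]) (by rw [transpose_sub, hKt, hJ, neg_sub_neg, neg_sub])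
    _ = frobSq (Z - (J - R)) := by rw [hZ]; congr 1; abel
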